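/- Let g, g0, g1, g2, b1, b2 be natural numbers and let χ be an integer satisfying χ = 2 + g − g0 − g1 − g2, χ = 2 − 2·b1 + b2, g0 ≥ b1, g1 ≥ b1, g2 ≥ b1, and assume additionally that if 1 ≤ χ ≤ 2 and b1 = 0 then g ≥ 3. Then 3·g ≥ |χ|. -/
import Mathlib


theorem three_genus_ge_abs_chi
    (g g0 g1 g2 b1 b2 : ℕ) (χ : ℤ)
    (h1 : χ = 2 + (g : ℤ) - g0 - g1 - g2)
    (h2 : χ = 2 - 2 * (b1 : ℤ) + b2)
    (h3 : g0 ≥ b1) (h4 : g1 ≥ b1) (h5 : g2 ≥ b1)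
    (h6 : 1 ≤ χ → χ ≤ 2 → b1 = 0 → g ≥ 3) :
    3 * (g : ℤ) ≥ |χ| := by
  have h3' : (g0 : ℤ) ≥ b1 := by exact_mod_cast h3
  have h4' : (g1 : ℤ) ≥ b1 := by exact_mod_cast h4
  have h5' : (g2 : ℤ) ≥ b1 := by exact_mod_cast h5
  have hb2 : (0 : ℤ) ≤ b2 := Int.natCast_nonneg _
  rcases abs_cases χ with ⟨he, hpos⟩ | ⟨he, hneg⟩ <;> rw [he]
  · rcases le_or_gt χ 0 with h0 | h0
    · linarith [Int.natCast_nonneg g]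
    · rcases le_or_gt χ 2 with h2' | h2'
      · rcases Nat.eq_zero_or_pos b1 with hb | hb
        · have := h6 h0 h2' hb
          have : (g : ℤ) ≥ 3 := by exact_mod_cast this
          linarith
        · have : (1 : ℤ) ≤ b1 := by exact_mod_cast hb
          linarith
      · linarith
  · linarith
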